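/- arXiv:2103.13935 — 3 statements merged into one kernel-verified Lean document; each statement's English description precedes it below -/
import Mathlib

section
/- Let r ≥ 1 be an integer, let q be a real number with q > 2/r, and let (ρ_j)_{j≥1} be a sequence of positive real numbers such that (ρ_j^{-1})_{j≥1} ∈ ℓ^q(ℕ), i.e. ∑_{j≥1} ρ_j^{-q} < ∞. Then the family (ξ_ν^{-1/2})_{ν∈ℱ} belongs to ℓ^q(ℱ), i.e. ∑_{ν∈ℱ} ξ_ν^{-q/2} < ∞. -/
/-- The weight `ξ_ν = ∏_j (∑_{l=0}^r C(ν_j, l) ρ_j^{2l})` for a finitely supported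
multi-index `ν` (each factor equals `1` whenever `ν_j = 0`). -/
noncomputable def xiWeight (r : ℕ) (ρ : ℕ → ℝ) (ν : ℕ →₀ ℕ) : ℝ :=
  ν.prod fun j k => ∑ l ∈ Finset.range (r + 1), (k.choose l : ℝ) * ρ j ^ (2 * l)

namespace XiAux

open Finset

/-- The single factor. -/
noncomputable def g (r : ℕ) (ρ : ℕ → ℝ) (j k : ℕ) : ℝ :=
  ∑ l ∈ Finset.range (r + 1), (k.choose l : ℝ) * ρ j ^ (2 * l)

/-- The factor raised to the power `-(q/2)`. -/
noncomputable def h (r : ℕ) (q : ℝ) (ρ : ℕ → ℝ) (j k : ℕ) : ℝ :=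
  g r ρ j k ^ (-(q / 2))

/-- The per-coordinate sum. -/
noncomputable def S (r : ℕ) (q : ℝ) (ρ : ℕ → ℝ) (j : ℕ) : ℝ :=
  ∑' k : ℕ, h r q ρ j k

variable {r : ℕ} {q : ℝ} {ρ : ℕ → ℝ} {j k : ℕ}

lemma term_le_g (hρj : 0 < ρ j) {l : ℕ} (hl : l ≤ r) (k : ℕ) :
    (k.choose l : ℝ) * ρ j ^ (2 * l) ≤ g r ρ j k :=
  Finset.single_le_sum (f := fun l => (k.choose l : ℝ) * ρ j ^ (2 * l))
    (fun i _ => by positivity) (Finset.mem_range.mpr (Nat.lt_succ_of_le hl))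

lemma one_le_g (hρj : 0 < ρ j) (k : ℕ) : 1 ≤ g r ρ j k := by
  have := term_le_g (r := r) (l := 0) hρj (Nat.zero_le r) k
  simpa using this

lemma g_pos (hρj : 0 < ρ j) (k : ℕ) : 0 < g r ρ j k :=
  lt_of_lt_of_le one_pos (one_le_g hρj k)

lemma g_zero (j : ℕ) : g r ρ j 0 = 1 := by
  unfold g
  rw [Finset.sum_eq_single 0]
  · simp
  · intro l _ hl
    simp [Nat.choose_eq_zero_of_lt (Nat.pos_of_ne_zero hl)]
  · intro habs
    exact absurd (Finset.mem_range.mpr (Nat.succ_pos r)) habs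

lemma C_pos (hr : 1 ≤ r) : (0 : ℝ) < (((2 * r) ^ r * r.factorial : ℕ) : ℝ) := by
  have h1 : 0 < (2 * r) ^ r * r.factorial :=
    Nat.mul_pos (Nat.pow_pos (by omega)) r.factorial_pos
  exact_mod_cast h1

lemma min_pos (hρj : 0 < ρ j) : 0 < min (ρ j ^ 2) (ρ j ^ (2 * r)) :=
  lt_min (pow_pos hρj 2) (pow_pos hρj _)

lemma g_lower (hr : 1 ≤ r) (hρj : 0 < ρ j) (hk : 1 ≤ k) :
    ((((2 * r) ^ r * r.factorial : ℕ) : ℝ)⁻¹ * min (ρ j ^ 2) (ρ j ^ (2 * r))) * (k : ℝ) ^ r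
      ≤ g r ρ j k := by
  have hC := C_pos hr
  set C : ℝ := (((2 * r) ^ r * r.factorial : ℕ) : ℝ) with hCdef
  have hm : 0 < min (ρ j ^ 2) (ρ j ^ (2 * r)) := min_pos hρj
  rcases lt_or_ge k (2 * r) with hk2 | hk2
  · -- small k : use the `l = 1` term, which equals `k * ρ j ^ 2`
    have h1 : (k : ℝ) * ρ j ^ 2 ≤ g r ρ j k := by
      have := term_le_g (r := r) (l := 1) hρj hr k
      simpa [Nat.choose_one_right] using this
    refine le_trans ?_ h1
    have hck : C⁻¹ * (k : ℝ) ^ r ≤ (k : ℝ) := by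
      rw [inv_mul_le_iff₀ hC]
      have hnat : k ^ r ≤ ((2 * r) ^ r * r.factorial) * k := by
        calc k ^ r = k ^ (r - 1) * k := by
              rw [← pow_succ, Nat.sub_add_cancel hr]
          _ ≤ (2 * r) ^ (r - 1) * k := Nat.mul_le_mul_right _ (Nat.pow_le_pow_left hk2.le _)
          _ ≤ ((2 * r) ^ r * r.factorial) * k := by
              refine Nat.mul_le_mul_right _ ?_
              calc (2 * r) ^ (r - 1) ≤ (2 * r) ^ r :=
                    Nat.pow_le_pow_right (by omega) (by omega)
                _ ≤ (2 * r) ^ r * r.factorial :=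
                    Nat.le_mul_of_pos_right _ r.factorial_pos
      rw [hCdef]
      exact_mod_cast hnat
    calc (C⁻¹ * min (ρ j ^ 2) (ρ j ^ (2 * r))) * (k : ℝ) ^ r
        = (C⁻¹ * (k : ℝ) ^ r) * min (ρ j ^ 2) (ρ j ^ (2 * r)) := by ring
      _ ≤ (k : ℝ) * (ρ j ^ 2) := by
          refine mul_le_mul hck (min_le_left _ _) hm.le (Nat.cast_nonneg k)
  · -- large k : use the `l = r` term together with `Nat.pow_le_choose`
    have h1 : (k.choose r : ℝ) * ρ j ^ (2 * r) ≤ g r ρ j k := term_le_g hρj le_rfl k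
    have h2 : (((k + 1 - r : ℕ) : ℝ)) ^ r / (r.factorial : ℝ) ≤ (k.choose r : ℝ) := by
      have := Nat.pow_le_choose (α := ℝ) r k
      push_cast at this ⊢
      exact this
    set a : ℝ := ((k + 1 - r : ℕ) : ℝ) with hadef
    have hrk : r ≤ k := by omega
    have hcast : a = (k : ℝ) + 1 - (r : ℝ) := by
      rw [hadef]
      have hle : r ≤ k + 1 := by omega
      push_cast [Nat.cast_sub hle]
      ring
    have hr1 : (1 : ℝ) ≤ (r : ℝ) := by exact_mod_cast hr
    have hk2' : 2 * (r : ℝ) ≤ (k : ℝ) := by exact_mod_cast hk2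
    have hhalf : (k : ℝ) / 2 ≤ a := by rw [hcast]; linarith
    have hknn : (0 : ℝ) ≤ (k : ℝ) := Nat.cast_nonneg k
    have hann : (0 : ℝ) ≤ a := by linarith
    have hka : (k : ℝ) ≤ 2 * (r : ℝ) * a := by nlinarith
    have hck : C⁻¹ * (k : ℝ) ^ r ≤ a ^ r / (r.factorial : ℝ) := by
      rw [inv_mul_le_iff₀ hC]
      have hCval : C = (2 * (r : ℝ)) ^ r * (r.factorial : ℝ) := by
        rw [hCdef]; push_cast; ring
      have hpow : (k : ℝ) ^ r ≤ (2 * (r : ℝ) * a) ^ r := pow_le_pow_left₀ hknn hka r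
      calc (k : ℝ) ^ r ≤ (2 * (r : ℝ) * a) ^ r := hpow
        _ = (2 * (r : ℝ)) ^ r * a ^ r := mul_pow _ _ _
        _ = C * (a ^ r / (r.factorial : ℝ)) := by
            rw [hCval]
            have : (0 : ℝ) < (r.factorial : ℝ) := by exact_mod_cast r.factorial_pos
            field_simp
    calc (C⁻¹ * min (ρ j ^ 2) (ρ j ^ (2 * r))) * (k : ℝ) ^ r
        = (C⁻¹ * (k : ℝ) ^ r) * min (ρ j ^ 2) (ρ j ^ (2 * r)) := by ring
      _ ≤ (a ^ r / (r.factorial : ℝ)) * (ρ j ^ (2 * r)) := by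
          refine mul_le_mul hck (min_le_right _ _) hm.le ?_
          positivity
      _ ≤ (k.choose r : ℝ) * ρ j ^ (2 * r) := by
          refine mul_le_mul_of_nonneg_right h2 ?_
          positivity
      _ ≤ g r ρ j k := h1

lemma h_nonneg (hρj : 0 < ρ j) (k : ℕ) : 0 ≤ h r q ρ j k :=
  Real.rpow_nonneg (g_pos hρj k).le _

lemma h_zero : h r q ρ j 0 = 1 := by
  rw [h, g_zero, Real.one_rpow]

lemma q_pos (hr : 1 ≤ r) (hq : 2 / (r : ℝ) < q) : 0 < q := by
  have hr0 : (0 : ℝ) < r := by exact_mod_cast hr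
  have : (0 : ℝ) < 2 / (r : ℝ) := by positivity
  linarith

lemma h_le (hr : 1 ≤ r) (hq0 : 0 ≤ q) (hρj : 0 < ρ j) (hk : 1 ≤ k) :
    h r q ρ j k ≤ ((((2 * r) ^ r * r.factorial : ℕ) : ℝ)⁻¹
        * min (ρ j ^ 2) (ρ j ^ (2 * r))) ^ (-(q / 2))
      * (k : ℝ) ^ (-((r : ℝ) * (q / 2))) := by
  have hC := C_pos hr
  have hm := min_pos (r := r) hρj
  have hk0 : (0 : ℝ) < (k : ℝ) := by exact_mod_cast hk
  have hbase : 0 < ((((2 * r) ^ r * r.factorial : ℕ) : ℝ)⁻¹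
      * min (ρ j ^ 2) (ρ j ^ (2 * r))) := mul_pos (inv_pos.mpr hC) hm
  have hx : 0 < ((((2 * r) ^ r * r.factorial : ℕ) : ℝ)⁻¹
      * min (ρ j ^ 2) (ρ j ^ (2 * r))) * (k : ℝ) ^ r := mul_pos hbase (pow_pos hk0 r)
  have hmono := Real.rpow_le_rpow_of_nonpos hx (g_lower hr hρj hk)
    (neg_nonpos.mpr (by linarith : (0:ℝ) ≤ q / 2))
  rw [Real.mul_rpow hbase.le (by positivity)] at hmono
  rw [← Real.rpow_natCast (k : ℝ) r, ← Real.rpow_mul hk0.le] at hmono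
  rw [h]
  calc g r ρ j k ^ (-(q / 2)) ≤ _ := hmono
    _ = _ := by rw [mul_neg]

lemma exponent_gt_one (hr : 1 ≤ r) (hq : 2 / (r : ℝ) < q) : 1 < (r : ℝ) * (q / 2) := by
  have hr0 : (0 : ℝ) < r := by exact_mod_cast hr
  have h2 : 2 < q * r := (div_lt_iff₀ hr0).mp hq
  nlinarith

lemma summable_aux (hr : 1 ≤ r) (hq : 2 / (r : ℝ) < q) :
    Summable fun k : ℕ => (k : ℝ) ^ (-((r : ℝ) * (q / 2))) :=
  Real.summable_nat_rpow.mpr (by linarith [exponent_gt_one hr hq])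

lemma h_summable (hr : 1 ≤ r) (hq : 2 / (r : ℝ) < q) (hρj : 0 < ρ j) :
    Summable (h r q ρ j) := by
  rw [← summable_nat_add_iff 1]
  refine Summable.of_nonneg_of_le (fun k => h_nonneg hρj _)
    (fun k => h_le hr (q_pos hr hq).le hρj (Nat.succ_le_succ (Nat.zero_le k))) ?_
  exact ((summable_nat_add_iff 1).mpr (summable_aux hr hq)).mul_left _

lemma one_le_S (hr : 1 ≤ r) (hq : 2 / (r : ℝ) < q) (hρj : 0 < ρ j) :
    1 ≤ S r q ρ j := by
  have := Summable.le_tsum (h_summable hr hq hρj) 0 (fun i _ => h_nonneg hρj i)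
  rwa [h_zero] at this

lemma S_sub_one_nonneg (hr : 1 ≤ r) (hq : 2 / (r : ℝ) < q) (hρj : 0 < ρ j) :
    0 ≤ S r q ρ j - 1 := by
  have := one_le_S hr hq hρj; linarith

lemma S_sub_one (hr : 1 ≤ r) (hq : 2 / (r : ℝ) < q) (hρj : 0 < ρ j) (hρ1 : 1 ≤ ρ j) :
    S r q ρ j - 1 ≤ ((((2 * r) ^ r * r.factorial : ℕ) : ℝ)⁻¹ ^ (-(q / 2))
        * ∑' k : ℕ, ((k + 1 : ℕ) : ℝ) ^ (-((r : ℝ) * (q / 2)))) * (ρ j)⁻¹ ^ q := by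
  have hq0 := q_pos hr hq
  have hC := C_pos hr
  have hsm := h_summable hr hq hρj
  have htail : S r q ρ j = h r q ρ j 0 + ∑' k : ℕ, h r q ρ j (k + 1) :=
    Summable.tsum_eq_zero_add hsm
  rw [h_zero] at htail
  have hS1 : S r q ρ j - 1 = ∑' k : ℕ, h r q ρ j (k + 1) := by linarith
  rw [hS1]
  have hmin : min (ρ j ^ 2) (ρ j ^ (2 * r)) = ρ j ^ 2 :=
    min_eq_left (pow_le_pow_right₀ hρ1 (by omega))
  set B : ℝ := (((2 * r) ^ r * r.factorial : ℕ) : ℝ)⁻¹ ^ (-(q / 2)) with hBdef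
  have hterm : ∀ k : ℕ, h r q ρ j (k + 1)
      ≤ (B * (ρ j)⁻¹ ^ q) * ((k + 1 : ℕ) : ℝ) ^ (-((r : ℝ) * (q / 2))) := by
    intro k
    have hle := h_le hr hq0.le hρj (k := k + 1) (Nat.succ_le_succ (Nat.zero_le k))
    rw [hmin] at hle
    have hsplit : ((((2 * r) ^ r * r.factorial : ℕ) : ℝ)⁻¹ * ρ j ^ 2) ^ (-(q / 2))
        = B * (ρ j)⁻¹ ^ q := by
      rw [Real.mul_rpow (inv_nonneg.mpr hC.le) (sq_nonneg _), hBdef]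
      congr 1
      rw [← Real.rpow_natCast (ρ j) 2, ← Real.rpow_mul hρj.le,
        Real.inv_rpow hρj.le, ← Real.rpow_neg hρj.le]
      congr 1
      push_cast
      ring
    rwa [hsplit] at hle
  have hsum2 : Summable fun k : ℕ => ((k + 1 : ℕ) : ℝ) ^ (-((r : ℝ) * (q / 2))) :=
    (summable_nat_add_iff 1).mpr (summable_aux hr hq)
  calc ∑' k : ℕ, h r q ρ j (k + 1)
      ≤ ∑' k : ℕ, (B * (ρ j)⁻¹ ^ q) * ((k + 1 : ℕ) : ℝ) ^ (-((r : ℝ) * (q / 2))) :=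
        Summable.tsum_le_tsum hterm ((summable_nat_add_iff 1).mpr hsm) (hsum2.mul_left _)
    _ = (B * (ρ j)⁻¹ ^ q) * ∑' k : ℕ, ((k + 1 : ℕ) : ℝ) ^ (-((r : ℝ) * (q / 2))) :=
        tsum_mul_left
    _ = _ := by ring

lemma summable_S_sub_one (hr : 1 ≤ r) (hq : 2 / (r : ℝ) < q) (hρ : ∀ j, 0 < ρ j)
    (hsum : Summable fun j => (ρ j)⁻¹ ^ q) :
    Summable fun j => S r q ρ j - 1 := by
  have hq0 := q_pos hr hq
  have hev : ∀ᶠ j in Filter.atTop, 1 ≤ ρ j := by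
    have hten := hsum.tendsto_atTop_zero
    filter_upwards [hten.eventually_lt_const one_pos] with j hj
    by_contra hlt
    push_neg at hlt
    have h1 : 1 < (ρ j)⁻¹ := (one_lt_inv₀ (hρ j)).mpr hlt
    have h2 : 1 < (ρ j)⁻¹ ^ q :=
      (Real.one_lt_rpow_iff_of_pos (by positivity)).mpr (Or.inl ⟨h1, hq0⟩)
    linarith
  obtain ⟨m₀, hm₀⟩ := Filter.eventually_atTop.mp hev
  rw [← summable_nat_add_iff m₀]
  refine Summable.of_nonneg_of_le
    (fun j => S_sub_one_nonneg hr hq (hρ _))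
    (fun j => S_sub_one hr hq (hρ _) (hm₀ _ (Nat.le_add_left m₀ j))) ?_
  exact ((summable_nat_add_iff m₀).mpr hsum).mul_left _

lemma prod_S_le (hr : 1 ≤ r) (hq : 2 / (r : ℝ) < q) (hρ : ∀ j, 0 < ρ j)
    (hsum : Summable fun j => (ρ j)⁻¹ ^ q) (N : ℕ) :
    ∏ j ∈ Finset.range N, S r q ρ j ≤ Real.exp (∑' j : ℕ, (S r q ρ j - 1)) := by
  calc ∏ j ∈ Finset.range N, S r q ρ j
      ≤ ∏ j ∈ Finset.range N, Real.exp (S r q ρ j - 1) := by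
        refine Finset.prod_le_prod
          (fun j _ => le_trans zero_le_one (one_le_S hr hq (hρ j))) (fun j _ => ?_)
        have := Real.add_one_le_exp (S r q ρ j - 1); linarith
    _ = Real.exp (∑ j ∈ Finset.range N, (S r q ρ j - 1)) := (Real.exp_sum _ _).symm
    _ ≤ _ := by
        refine Real.exp_le_exp.mpr (Summable.sum_le_tsum _ (fun j _ => S_sub_one_nonneg hr hq (hρ j)) ?_)
        exact summable_S_sub_one hr hq hρ hsum

lemma sum_prod_le (hr : 1 ≤ r) (hq : 2 / (r : ℝ) < q) (hρ : ∀ j, 0 < ρ j) :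
    ∀ (N : ℕ) (u : Finset (ℕ →₀ ℕ)), (∀ ν ∈ u, ν.support ⊆ Finset.range N) →
      ∑ ν ∈ u, ∏ j ∈ Finset.range N, h r q ρ j (ν j) ≤ ∏ j ∈ Finset.range N, S r q ρ j := by
  intro N
  induction N with
  | zero =>
    intro u hu
    simp only [Finset.range_zero, Finset.prod_empty]
    have hsub : u ⊆ {0} := fun ν hν => Finset.mem_singleton.mpr
      (Finsupp.support_eq_empty.mp (Finset.subset_empty.mp (hu ν hν)))
    have hcard : u.card ≤ 1 := by
      simpa using Finset.card_le_card hsub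
    calc ∑ _ν ∈ u, (1 : ℝ) = (u.card : ℝ) := by rw [Finset.sum_const]; simp
      _ ≤ 1 := by exact_mod_cast hcard
  | succ N ih =>
    intro u hu
    classical
    have hmap : ∀ ν ∈ u, ν N ∈ u.image (fun ν : ℕ →₀ ℕ => ν N) :=
      fun ν hν => Finset.mem_image_of_mem _ hν
    have hP0 : (0 : ℝ) ≤ ∏ j ∈ Finset.range N, S r q ρ j :=
      Finset.prod_nonneg fun j _ => le_trans zero_le_one (one_le_S hr hq (hρ j))
    have key : ∀ kk ∈ u.image (fun ν : ℕ →₀ ℕ => ν N),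
        ∑ ν ∈ u.filter (fun ν => ν N = kk), ∏ j ∈ Finset.range (N + 1), h r q ρ j (ν j)
          ≤ h r q ρ N kk * ∏ j ∈ Finset.range N, S r q ρ j := by
      intro kk _
      have step1 : ∀ ν ∈ u.filter (fun ν => ν N = kk),
          ∏ j ∈ Finset.range (N + 1), h r q ρ j (ν j)
            = h r q ρ N kk * ∏ j ∈ Finset.range N, h r q ρ j ((Finsupp.erase N ν) j) := by
        intro ν hν
        have hνN : ν N = kk := (Finset.mem_filter.mp hν).2
        rw [Finset.prod_range_succ, hνN, mul_comm]
        congr 1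
        refine Finset.prod_congr rfl fun j hj => ?_
        rw [Finsupp.erase_ne (Finset.mem_range.mp hj).ne]
      have hinj : ∀ ν₁ ∈ u.filter (fun ν => ν N = kk), ∀ ν₂ ∈ u.filter (fun ν => ν N = kk),
          Finsupp.erase N ν₁ = Finsupp.erase N ν₂ → ν₁ = ν₂ := by
        intro ν₁ h₁ ν₂ h₂ he
        ext j
        rcases eq_or_ne j N with rfl | hj
        · rw [(Finset.mem_filter.mp h₁).2, (Finset.mem_filter.mp h₂).2]
        · calc ν₁ j = (Finsupp.erase N ν₁) j := (Finsupp.erase_ne hj).symm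
            _ = (Finsupp.erase N ν₂) j := by rw [he]
            _ = ν₂ j := Finsupp.erase_ne hj
      have hsupp : ∀ μ ∈ (u.filter (fun ν => ν N = kk)).image (Finsupp.erase N),
          μ.support ⊆ Finset.range N := by
        intro μ hμ
        obtain ⟨ν, hν, rfl⟩ := Finset.mem_image.mp hμ
        intro j hj
        rw [Finsupp.support_erase] at hj
        have hjN : j ≠ N := Finset.ne_of_mem_erase hj
        have hjsup : j ∈ ν.support := Finset.mem_of_mem_erase hj
        have hjlt := hu ν (Finset.mem_filter.mp hν).1 hjsup
        rw [Finset.mem_range] at hjlt ⊢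
        omega
      calc ∑ ν ∈ u.filter (fun ν => ν N = kk), ∏ j ∈ Finset.range (N + 1), h r q ρ j (ν j)
          = ∑ ν ∈ u.filter (fun ν => ν N = kk),
              h r q ρ N kk * ∏ j ∈ Finset.range N, h r q ρ j ((Finsupp.erase N ν) j) :=
            Finset.sum_congr rfl step1
        _ = h r q ρ N kk * ∑ ν ∈ u.filter (fun ν => ν N = kk),
              ∏ j ∈ Finset.range N, h r q ρ j ((Finsupp.erase N ν) j) := by
            rw [Finset.mul_sum]
        _ = h r q ρ N kk * ∑ μ ∈ (u.filter (fun ν => ν N = kk)).image (Finsupp.erase N),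
              ∏ j ∈ Finset.range N, h r q ρ j (μ j) := by
            rw [Finset.sum_image hinj]
        _ ≤ h r q ρ N kk * ∏ j ∈ Finset.range N, S r q ρ j :=
            mul_le_mul_of_nonneg_left (ih _ hsupp) (h_nonneg (hρ N) kk)
    calc ∑ ν ∈ u, ∏ j ∈ Finset.range (N + 1), h r q ρ j (ν j)
        = ∑ kk ∈ u.image (fun ν : ℕ →₀ ℕ => ν N), ∑ ν ∈ u.filter (fun ν => ν N = kk),
            ∏ j ∈ Finset.range (N + 1), h r q ρ j (ν j) :=
          (Finset.sum_fiberwise_of_maps_to hmap _).symm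
      _ ≤ ∑ kk ∈ u.image (fun ν : ℕ →₀ ℕ => ν N),
            h r q ρ N kk * ∏ j ∈ Finset.range N, S r q ρ j := Finset.sum_le_sum key
      _ = (∑ kk ∈ u.image (fun ν : ℕ →₀ ℕ => ν N), h r q ρ N kk)
            * ∏ j ∈ Finset.range N, S r q ρ j := by rw [Finset.sum_mul]
      _ ≤ S r q ρ N * ∏ j ∈ Finset.range N, S r q ρ j := by
          refine mul_le_mul_of_nonneg_right ?_ hP0
          exact Summable.sum_le_tsum _ (fun kk _ => h_nonneg (hρ N) kk) (h_summable hr hq (hρ N))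
      _ = ∏ j ∈ Finset.range (N + 1), S r q ρ j := by
          rw [Finset.prod_range_succ, mul_comm]

end XiAux

theorem stmt0 (r : ℕ) (hr : 1 ≤ r) (q : ℝ) (hq : 2 / (r : ℝ) < q)
    (ρ : ℕ → ℝ) (hρ : ∀ j, 0 < ρ j)
    (hsum : Summable fun j => (ρ j)⁻¹ ^ q) :
    Summable fun ν : ℕ →₀ ℕ => xiWeight r ρ ν ^ (-(q / 2)) := by
  classical
  refine summable_of_sum_le (c := Real.exp (∑' j : ℕ, (XiAux.S r q ρ j - 1))) ?_ ?_
  · intro ν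
    refine Real.rpow_nonneg ?_ _
    show 0 ≤ ν.prod fun j k => ∑ l ∈ Finset.range (r + 1), (k.choose l : ℝ) * ρ j ^ (2 * l)
    exact Finset.prod_nonneg fun j _ =>
      le_trans zero_le_one (XiAux.one_le_g (r := r) (hρ j) (ν j))
  · intro u
    set N : ℕ := (u.sup fun ν => ν.support.sup id) + 1 with hN
    have hsub : ∀ ν ∈ u, ν.support ⊆ Finset.range N := by
      intro ν hν j hj
      have h1 : j ≤ ν.support.sup id := Finset.le_sup (f := id) hj
      have h2 : ν.support.sup id ≤ u.sup fun ν => ν.support.sup id :=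
        Finset.le_sup (f := fun ν : ℕ →₀ ℕ => ν.support.sup id) hν
      rw [Finset.mem_range]
      omega
    have heq : ∀ ν ∈ u, xiWeight r ρ ν ^ (-(q / 2))
        = ∏ j ∈ Finset.range N, XiAux.h r q ρ j (ν j) := by
      intro ν hν
      have h1 : ν.prod (XiAux.g r ρ) = ∏ j ∈ Finset.range N, XiAux.g r ρ j (ν j) :=
        Finsupp.prod_of_support_subset ν (hsub ν hν) _ (fun j _ => XiAux.g_zero j)
      rw [show xiWeight r ρ ν = ν.prod (XiAux.g r ρ) from rfl, h1,
        ← Real.finset_prod_rpow _ _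
          (fun j _ => le_trans zero_le_one (XiAux.one_le_g (hρ j) _)) _]
      rfl
    rw [Finset.sum_congr rfl heq]
    exact le_trans (XiAux.sum_prod_le hr hq hρ N u hsub)
      (XiAux.prod_S_le hr hq hρ hsum N)
end

section
/- Let (Y_j)_{j≥1} be a sequence of independent standard Gaussian random variables on a probability space, and let (ρ_j)_{j≥1} be a sequence of positive real numbers such that ∑_{j≥1} exp(−ρ_j²) < ∞. Then for every real p with 0 < p < ∞, the random variable exp( p · sup_{j≥1} |Y_j| / ρ_j ) has finite expectation. -/
open MeasureTheory ProbabilityTheory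

section Aux
open Real

lemma pdf_shift' (t y : ℝ) :
    Real.exp (t * y) * gaussianPDFReal 0 1 y = Real.exp (t^2/2) * gaussianPDFReal t 1 y := by
  simp only [gaussianPDFReal, NNReal.coe_one, mul_one, sub_zero]
  rw [show (√(2 * π))⁻¹ * rexp (-(y - t) ^ 2 / 2) = rexp (-(y - t) ^ 2 / 2) * (√(2 * π))⁻¹ from
    mul_comm _ _, show (√(2 * π))⁻¹ * rexp (-y ^ 2 / 2) = rexp (-y ^ 2 / 2) * (√(2 * π))⁻¹ from
    mul_comm _ _, ← mul_assoc, ← mul_assoc, ← Real.exp_add, ← Real.exp_add]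
  congr 2
  ring

lemma lintegral_exp_mul_gaussian' (t : ℝ) :
    ∫⁻ y, ENNReal.ofReal (Real.exp (t * y)) ∂(gaussianReal 0 1)
      = ENNReal.ofReal (Real.exp (t^2/2)) := by
  rw [gaussianReal_of_var_ne_zero 0 one_ne_zero,
    lintegral_withDensity_eq_lintegral_mul _
      (show Measurable (gaussianPDF 0 1) from (measurable_gaussianPDFReal 0 1).ennreal_ofReal)
      (show Measurable fun y => ENNReal.ofReal (Real.exp (t * y)) by fun_prop)]
  have : ∀ y, (gaussianPDF 0 1 * fun y => ENNReal.ofReal (Real.exp (t * y))) y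
      = ENNReal.ofReal (Real.exp (t^2/2)) * ENNReal.ofReal (gaussianPDFReal t 1 y) := by
    intro y
    simp only [Pi.mul_apply, gaussianPDF]
    rw [← ENNReal.ofReal_mul (gaussianPDFReal_nonneg 0 1 y), mul_comm, pdf_shift',
      ENNReal.ofReal_mul (Real.exp_nonneg _)]
  simp only [this]
  rw [lintegral_const_mul _ ((measurable_gaussianPDFReal t 1).ennreal_ofReal),
    lintegral_gaussianPDFReal_eq_one t one_ne_zero, mul_one]

lemma lintegral_exp_mul_abs_gaussian_le (t : ℝ) :
    ∫⁻ y, ENNReal.ofReal (Real.exp (t * |y|)) ∂(gaussianReal 0 1)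
      ≤ 2 * ENNReal.ofReal (Real.exp (t^2/2)) := by
  have hb : ∀ y : ℝ, ENNReal.ofReal (Real.exp (t * |y|))
      ≤ ENNReal.ofReal (Real.exp (t * y)) + ENNReal.ofReal (Real.exp (-t * y)) := by
    intro y
    rcases abs_choice y with h | h
    · rw [h]; exact le_self_add
    · rw [h]
      refine le_add_self.trans_eq' ?_
      rw [neg_mul, mul_neg]
  calc ∫⁻ y, ENNReal.ofReal (Real.exp (t * |y|)) ∂(gaussianReal 0 1)
      ≤ ∫⁻ y, (ENNReal.ofReal (Real.exp (t * y)) + ENNReal.ofReal (Real.exp (-t * y)))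
          ∂(gaussianReal 0 1) := lintegral_mono hb
    _ = 2 * ENNReal.ofReal (Real.exp (t^2/2)) := by
        rw [lintegral_add_left (by fun_prop), lintegral_exp_mul_gaussian',
          lintegral_exp_mul_gaussian', neg_pow, neg_one_sq, one_mul, two_mul]

end Aux

/-- If `(Y_j)` are independent standard Gaussian random variables and `(ρ_j)` are
positive reals with `∑_j exp(-ρ_j²) < ∞`, then for every `0 < p < ∞` the random
variable `exp(p · sup_j |Y_j| / ρ_j)` has finite expectation. -/
theorem stmt6 {Ω : Type*} [MeasurableSpace Ω] (μ : Measure Ω) [IsProbabilityMeasure μ]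
    (Y : ℕ → Ω → ℝ) (hmeas : ∀ j, Measurable (Y j))
    (hindep : iIndepFun Y μ)
    (hlaw : ∀ j, μ.map (Y j) = gaussianReal 0 1)
    (ρ : ℕ → ℝ) (hρ : ∀ j, 0 < ρ j)
    (hsum : Summable fun j => Real.exp (-(ρ j) ^ 2))
    (p : ℝ) (hp : 0 < p) :
    Integrable (fun ω => Real.exp (p * ⨆ j, |Y j ω| / ρ j)) μ := by
  -- uniform positive lower bound on ρ
  obtain ⟨N, hN⟩ : ∃ N, ∀ j, N ≤ j → 1 ≤ ρ j := by
    have h0 : Filter.Tendsto (fun j => Real.exp (-(ρ j) ^ 2)) Filter.atTop (nhds 0) :=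
      hsum.tendsto_atTop_zero
    have := (h0.eventually_lt_const (Real.exp_pos (-1))).exists_forall_of_atTop
    obtain ⟨N, hN⟩ := this
    refine ⟨N, fun j hj => ?_⟩
    have h2 : -(ρ j) ^ 2 < -1 := by
      have := hN j hj
      exact (Real.exp_lt_exp).mp this
    nlinarith [hρ j]
  set c : ℝ := (Finset.range (N + 1)).inf' (by simp) (fun j => min (ρ j) 1) with hc_def
  have hc0 : 0 < c := by
    rw [hc_def]
    apply (Finset.lt_inf'_iff _).mpr
    exact fun j _ => lt_min (hρ j) one_pos
  have hc1 : c ≤ 1 := by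
    have h : c ≤ min (ρ 0) 1 := Finset.inf'_le _ (Finset.mem_range.mpr (Nat.succ_pos N))
    exact h.trans (min_le_right _ _)
  have hcle : ∀ j, c ≤ ρ j := by
    intro j
    rcases le_or_gt j N with h | h
    · have h' : c ≤ min (ρ j) 1 := Finset.inf'_le _ (Finset.mem_range_succ_iff.mpr h)
      exact h'.trans (min_le_left _ _)
    · exact hc1.trans (hN j h.le)
  -- notation
  set X : ℕ → Ω → ℝ := fun j ω => |Y j ω| / ρ j with hX_def
  have hXmeas : ∀ j, Measurable (X j) := fun j => ((hmeas j).abs).div_const _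
  have hXnn : ∀ j ω, 0 ≤ X j ω := fun j ω => div_nonneg (abs_nonneg _) (hρ j).le
  have hSmeas : Measurable fun ω => ⨆ j, X j ω := Measurable.iSup hXmeas
  have hFmeas : Measurable fun ω => Real.exp (p * ⨆ j, X j ω) :=
    (measurable_const.mul hSmeas).exp
  set M : ℝ := 3 / 2 with hM_def
  -- the dominating functions
  set g : ℕ → Ω → ENNReal := fun j ω =>
    ENNReal.ofReal (Real.exp (-(M * (ρ j) ^ 2)) * Real.exp ((p / ρ j + ρ j) * |Y j ω|))
    with hg_def
  have hgmeas : ∀ j, Measurable (g j) := by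
    intro j
    apply Measurable.ennreal_ofReal
    fun_prop
  -- pointwise bound
  have hpt : ∀ ω, ENNReal.ofReal (Real.exp (p * ⨆ j, X j ω))
      ≤ ENNReal.ofReal (Real.exp (p * M)) + ∑' j, g j ω := by
    intro ω
    have hexpM : (1 : ℝ) ≤ Real.exp (p * M) := by
      rw [← Real.exp_zero]
      exact Real.exp_le_exp.mpr (by positivity)
    by_cases hbdd : BddAbove (Set.range fun j => X j ω)
    · have hmap : ENNReal.ofReal (Real.exp (p * ⨆ j, X j ω))
          = ⨆ j, ENNReal.ofReal (Real.exp (p * X j ω)) := by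
        have hmono : Monotone fun t : ℝ => ENNReal.ofReal (Real.exp (p * t)) := fun a b hab =>
          ENNReal.ofReal_le_ofReal (Real.exp_le_exp.mpr (by nlinarith))
        have hcont : ContinuousAt (fun t : ℝ => ENNReal.ofReal (Real.exp (p * t)))
            (⨆ j, X j ω) := by
          exact (ENNReal.continuous_ofReal.comp (by fun_prop)).continuousAt
        exact hmono.map_ciSup_of_continuousAt hcont hbdd
      rw [hmap]
      refine iSup_le fun j => ?_
      rcases le_or_gt (X j ω) M with h | h
      · refine le_trans ?_ le_self_add
        exact ENNReal.ofReal_le_ofReal (Real.exp_le_exp.mpr (by nlinarith))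
      · refine le_trans ?_ (le_add_left (ENNReal.le_tsum j))
        refine ENNReal.ofReal_le_ofReal ?_
        rw [← Real.exp_add]
        refine Real.exp_le_exp.mpr ?_
        have hr := hρ j
        have hy : M * ρ j ≤ |Y j ω| := by
          rw [hX_def] at h
          simp only at h
          rw [lt_div_iff₀ hr] at h
          linarith
        have heq : p * X j ω = p / ρ j * |Y j ω| := by
          simp only [hX_def]
          field_simp
        rw [heq, add_mul]
        have h4 : M * ρ j ^ 2 ≤ ρ j * |Y j ω| := by nlinarith [mul_le_mul_of_nonneg_right hy hr.le]
        simp only [hM_def] at h4 ⊢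
        linarith
    · rw [Real.iSup_of_not_bddAbove hbdd, mul_zero, Real.exp_zero]
      exact le_trans (ENNReal.ofReal_le_ofReal hexpM) le_self_add
  -- integral bound for each g j
  have hgint : ∀ j, ∫⁻ ω, g j ω ∂μ
      ≤ ENNReal.ofReal (2 * Real.exp (p + p ^ 2 / (2 * c ^ 2)) * Real.exp (-(ρ j) ^ 2)) := by
    intro j
    have hr := hρ j
    set t : ℝ := p / ρ j + ρ j with ht_def
    have htpos : 0 < t := by positivity
    have hmapint : ∫⁻ ω, g j ω ∂μ
        = ENNReal.ofReal (Real.exp (-(M * (ρ j) ^ 2)))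
            * ∫⁻ y, ENNReal.ofReal (Real.exp (t * |y|)) ∂(gaussianReal 0 1) := by
      rw [hg_def]
      simp only
      have : ∀ ω, ENNReal.ofReal (Real.exp (-(M * (ρ j) ^ 2)) * Real.exp (t * |Y j ω|))
          = ENNReal.ofReal (Real.exp (-(M * (ρ j) ^ 2)))
            * ENNReal.ofReal (Real.exp (t * |Y j ω|)) := fun ω =>
        ENNReal.ofReal_mul (Real.exp_nonneg _)
      simp only [← ht_def, this]
      rw [lintegral_const_mul _ (by fun_prop)]
      congr 1
      rw [← hlaw j, lintegral_map (by fun_prop) (hmeas j)]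
    rw [hmapint]
    calc ENNReal.ofReal (Real.exp (-(M * (ρ j) ^ 2)))
          * ∫⁻ y, ENNReal.ofReal (Real.exp (t * |y|)) ∂(gaussianReal 0 1)
        ≤ ENNReal.ofReal (Real.exp (-(M * (ρ j) ^ 2))) * (2 * ENNReal.ofReal (Real.exp (t^2/2))) :=
          mul_le_mul_right (lintegral_exp_mul_abs_gaussian_le t) _
      _ ≤ ENNReal.ofReal (2 * Real.exp (p + p ^ 2 / (2 * c ^ 2)) * Real.exp (-(ρ j) ^ 2)) := by
          rw [← ENNReal.ofReal_ofNat, ← ENNReal.ofReal_mul (by norm_num),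
            ← ENNReal.ofReal_mul (Real.exp_nonneg _)]
          refine ENNReal.ofReal_le_ofReal ?_
          rw [mul_comm, mul_assoc, ← Real.exp_add, mul_assoc, ← Real.exp_add]
          refine mul_le_mul_of_nonneg_left (Real.exp_le_exp.mpr ?_) (by norm_num)
          have hc2 : c ^ 2 ≤ (ρ j) ^ 2 := by nlinarith [hcle j, hc0]
          have h1 : t ^ 2 / 2 = p ^ 2 / (2 * (ρ j) ^ 2) + p + (ρ j) ^ 2 / 2 := by
            rw [ht_def]; field_simp; ring
          have h2 : p ^ 2 / (2 * (ρ j) ^ 2) ≤ p ^ 2 / (2 * c ^ 2) := by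
            apply div_le_div_of_nonneg_left (by positivity) (by positivity)
            nlinarith
          rw [hM_def] at *
          nlinarith
  -- conclusion
  constructor
  · exact hFmeas.aestronglyMeasurable
  · rw [hasFiniteIntegral_iff_ofReal (ae_of_all _ fun ω => (Real.exp_nonneg _))]
    calc ∫⁻ ω, ENNReal.ofReal (Real.exp (p * ⨆ j, X j ω)) ∂μ
        ≤ ∫⁻ ω, (ENNReal.ofReal (Real.exp (p * M)) + ∑' j, g j ω) ∂μ := lintegral_mono hpt
      _ = ENNReal.ofReal (Real.exp (p * M)) + ∑' j, ∫⁻ ω, g j ω ∂μ := by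
          rw [lintegral_add_left measurable_const, lintegral_const, measure_univ, mul_one,
            lintegral_tsum fun j => (hgmeas j).aemeasurable]
      _ ≤ ENNReal.ofReal (Real.exp (p * M))
          + ∑' j, ENNReal.ofReal (2 * Real.exp (p + p ^ 2 / (2 * c ^ 2))
              * Real.exp (-(ρ j) ^ 2)) := by
          exact add_le_add_right (ENNReal.tsum_le_tsum hgint) _
      _ < ⊤ := by
          rw [← ENNReal.ofReal_tsum_of_nonneg (fun j => by positivity)
            ((hsum.mul_left _))]
          exact ENNReal.add_lt_top.mpr ⟨ENNReal.ofReal_lt_top, ENNReal.ofReal_lt_top⟩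
end

section
/- Let I be a countable index set, let ξ : I → (0,∞) be a weight function, let 0 < q < ∞, and set S := ∑_{ν∈I} ξ_ν^{−q/2}, assumed finite. Let (a_ν)_{ν∈I} be nonnegative real numbers with ∑_{ν∈I} ξ_ν a_ν² ≤ C² for some C ≥ 0. Let n ≥ 0 and let Λ ⊆ I be a finite set with #Λ = n such that ξ_ν ≤ ξ_μ whenever ν ∈ Λ and μ ∉ Λ (i.e. Λ collects n indices with the smallest weights). Then ∑_{ν∉Λ} a_ν² ≤ C² S^{2/q} (n+1)^{−2/q}. -/
/-- Abstract Stechkin-type tail estimate: if `S = ∑_ν ξ_ν^{−q/2} < ∞`,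
`∑_ν ξ_ν a_ν² ≤ C²` with `a_ν ≥ 0`, and `Λ` is a set of `n` indices with the
smallest weights (`ξ_ν ≤ ξ_μ` for `ν ∈ Λ`, `μ ∉ Λ`), then
`∑_{ν ∉ Λ} a_ν² ≤ C² S^{2/q} (n+1)^{−2/q}`. -/
theorem stmt14 {I : Type*} [Countable I] (ξ : I → ℝ) (hξ : ∀ ν, 0 < ξ ν)
    (q : ℝ) (hq : 0 < q)
    (hS : Summable fun ν => ξ ν ^ (-(q / 2)))
    (a : I → ℝ) (ha : ∀ ν, 0 ≤ a ν)
    (C : ℝ) (hC : 0 ≤ C)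
    (hsum : Summable fun ν => ξ ν * a ν ^ 2)
    (hbound : ∑' ν, ξ ν * a ν ^ 2 ≤ C ^ 2)
    (n : ℕ) (Λ : Finset I) (hcard : Λ.card = n)
    (hmin : ∀ ν ∈ Λ, ∀ μ ∉ Λ, ξ ν ≤ ξ μ) :
    ∑' ν : {ν : I // ν ∉ Λ}, a (ν : I) ^ 2
      ≤ C ^ 2 * (∑' ν, ξ ν ^ (-(q / 2))) ^ (2 / q) * ((n : ℝ) + 1) ^ (-(2 / q)) := by
  set S : ℝ := ∑' ν, ξ ν ^ (-(q / 2)) with hSdef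
  have hSnn : 0 ≤ S := tsum_nonneg fun ν => Real.rpow_nonneg (hξ ν).le _
  have hn1 : (0:ℝ) < (n:ℝ) + 1 := by positivity
  set K : ℝ := S ^ (2 / q) * ((n : ℝ) + 1) ^ (-(2 / q)) with hKdef
  have hKnn : 0 ≤ K := by positivity
  -- key pointwise bound
  have key : ∀ μ : I, μ ∉ Λ → a μ ^ 2 ≤ K * (ξ μ * a μ ^ 2) := by
    intro μ hμ
    classical
    have hstep : ((n:ℝ) + 1) * ξ μ ^ (-(q / 2)) ≤ S := by
      have hle : ∀ ν ∈ insert μ Λ, ξ μ ^ (-(q / 2)) ≤ ξ ν ^ (-(q / 2)) := by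
        intro ν hν
        rcases Finset.mem_insert.mp hν with rfl | hν
        · exact le_rfl
        · exact Real.rpow_le_rpow_of_nonpos (hξ ν) (hmin ν hν μ hμ)
            (by nlinarith : -(q / 2) ≤ 0)
      have hcard' : (insert μ Λ).card = n + 1 := by
        rw [Finset.card_insert_of_notMem hμ, hcard]
      have h1 : (insert μ Λ).card • ξ μ ^ (-(q / 2))
          ≤ ∑ ν ∈ insert μ Λ, ξ ν ^ (-(q / 2)) := Finset.card_nsmul_le_sum _ _ _ hle
      have h2 : ∑ ν ∈ insert μ Λ, ξ ν ^ (-(q / 2)) ≤ S :=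
        Summable.sum_le_tsum _ (fun ν _ => Real.rpow_nonneg (hξ ν).le _) hS
      rw [hcard', nsmul_eq_mul] at h1
      push_cast at h1
      linarith
    have hinv : (ξ μ)⁻¹ ≤ K := by
      have h3 : ξ μ ^ (-(q / 2)) ≤ S / ((n:ℝ) + 1) := by
        rw [le_div_iff₀ hn1]; linarith [hstep]
      have h4 : (ξ μ ^ (-(q / 2))) ^ (2 / q) ≤ (S / ((n:ℝ) + 1)) ^ (2 / q) :=
        Real.rpow_le_rpow (Real.rpow_nonneg (hξ μ).le _) h3 (by positivity)
      have h5 : (ξ μ ^ (-(q / 2))) ^ (2 / q) = (ξ μ)⁻¹ := by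
        have hm : -(q / 2) * (2 / q) = -1 := by field_simp
        rw [← Real.rpow_mul (hξ μ).le, hm, Real.rpow_neg_one]
      have h6 : (S / ((n:ℝ) + 1)) ^ (2 / q) = K := by
        rw [Real.div_rpow hSnn hn1.le, hKdef, Real.rpow_neg hn1.le, div_eq_mul_inv]
      rw [← h5, ← h6]; exact h4
    calc a μ ^ 2 = (ξ μ)⁻¹ * (ξ μ * a μ ^ 2) := by
          rw [← mul_assoc, inv_mul_cancel₀ (hξ μ).ne', one_mul]
      _ ≤ K * (ξ μ * a μ ^ 2) :=
          mul_le_mul_of_nonneg_right hinv (mul_nonneg (hξ μ).le (sq_nonneg _))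
  -- sum up
  have hsub : Summable fun ν : {ν : I // ν ∉ Λ} => ξ (ν : I) * a (ν : I) ^ 2 :=
    hsum.subtype _
  have hsq : Summable fun ν : {ν : I // ν ∉ Λ} => a (ν : I) ^ 2 :=
    Summable.of_nonneg_of_le (fun ν => by positivity)
      (fun ν => key ν ν.2) (hsub.mul_left K)
  calc ∑' ν : {ν : I // ν ∉ Λ}, a (ν : I) ^ 2
      ≤ ∑' ν : {ν : I // ν ∉ Λ}, K * (ξ (ν : I) * a (ν : I) ^ 2) :=
        Summable.tsum_le_tsum (fun ν => key ν ν.2) hsq (hsub.mul_left K)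
    _ = K * ∑' ν : {ν : I // ν ∉ Λ}, ξ (ν : I) * a (ν : I) ^ 2 := tsum_mul_left
    _ ≤ K * ∑' ν, ξ ν * a ν ^ 2 := by
        apply mul_le_mul_of_nonneg_left _ hKnn
        exact Summable.tsum_subtype_le (fun ν => ξ ν * a ν ^ 2) _ (fun ν => mul_nonneg (hξ ν).le (sq_nonneg _)) hsum
    _ ≤ K * C ^ 2 := mul_le_mul_of_nonneg_left hbound hKnn
    _ = C ^ 2 * S ^ (2 / q) * ((n : ℝ) + 1) ^ (-(2 / q)) := by ring
end
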